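/- arXiv:2305.03821 — 6 statements merged into one kernel-verified Lean document; each statement's English description precedes it below -/
import Mathlib

section
/- Let p_n denote the n-th prime (p_1 = 2, p_2 = 3, ...). For every integer n ≥ 2 such that p_{n-1} > 28, one has p_{n+1} < 2·p_{n-1}. -/
/-- The n-th prime, 1-indexed: `nthPrime 1 = 2`, `nthPrime 2 = 3`, ... -/
noncomputable def nthPrime (n : ℕ) : ℕ := Nat.nth Nat.Prime (n - 1)

/-!
Erdős' proof of Bertrand's postulate also yields two primes in `(n, 2n]`: in `centralBinom n`
the primes `p ≤ √(2n)` contribute at most `2n` each and there are at most `√(2n) - 1` of them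
(`1` is not prime), the primes in `(√(2n), 2n/3]` contribute at most their product `≤ 4^(2n/3)`,
those in `(2n/3, n]` nothing, and those in `(n, 2n]` at most their product. With at most one
prime in `(n, 2n]` this gives `n · centralBinom n ≤ n (2n)^√(2n) 4^(2n/3)`, at most `4^n`
for `n ≥ 512` (`bertrand_main_inequality`), contradicting `4^n < n · centralBinom n`.
Smaller `n ≥ 6` are covered by explicit prime pairs. Two primes in `(p_{n-1}, 2 p_{n-1})` force
`p_{n+1} < 2 p_{n-1}`.
-/

open Finset

namespace Nat

theorem nth_succ_le_of_nth_lt {p : ℕ → Prop} {k a : ℕ} (h : nth p k < a) (ha : p a) :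
    nth p (k + 1) ≤ a :=
  not_lt.1 fun h' => (le_nth_of_lt_nth_succ h' ha).not_gt h

theorem pow_factorization_centralBinom_le {n p : ℕ} (hn : 2 < n) (hp : 0 < p) :
    p ^ (centralBinom n).factorization p ≤ (if p ≤ sqrt (2 * n) then 2 * n else 1) *
      ((if p ≤ 2 * n / 3 then p else 1) * (if n < p then p else 1)) := by
  by_cases hps : p ≤ sqrt (2 * n)
  · calc p ^ (centralBinom n).factorization p ≤ 2 * n := pow_factorization_choose_le (by omega)
      _ ≤ _ := by rw [if_pos hps]; exact Nat.le_mul_of_pos_right _ (by split_ifs <;> omega)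
  have hv : (centralBinom n).factorization p ≤ 1 :=
    factorization_choose_le_one (sqrt_lt'.1 (not_le.1 hps))
  by_cases hmid : 2 * n / 3 < p ∧ p ≤ n
  · rw [factorization_centralBinom_of_two_mul_self_lt_three_mul hn hmid.2 (by omega), pow_zero]
    exact Nat.one_le_iff_ne_zero.2 (by split_ifs <;> omega)
  · calc p ^ (centralBinom n).factorization p ≤ p :=
          (Nat.pow_le_pow_right hp hv).trans_eq (pow_one p)
      _ = _ := by split_ifs <;> omega

theorem centralBinom_le_mul_prod_primes_Ioc {n : ℕ} (hn : 2 < n) :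
    centralBinom n ≤
      (2 * n) ^ (sqrt (2 * n) - 1) * 4 ^ (2 * n / 3) * ∏ p ∈ Ioc n (2 * n) with p.Prime, p := by
  set s := sqrt (2 * n)
  have hC : centralBinom n =
      ∏ p ∈ range (2 * n + 1) with p.Prime, p ^ (centralBinom n).factorization p := by
    rw [prod_filter_of_ne fun p _ h => by_contra fun hp => h (by
      simp [factorization_eq_zero_of_not_prime _ hp])]
    exact (prod_pow_factorization_centralBinom n).symm
  have hsmall : #{p ∈ range (2 * n + 1) | p.Prime ∧ p ≤ s} ≤ s - 1 := by
    calc _ ≤ #(Icc 2 s) := card_le_card fun p hp => by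
            simp only [mem_filter, mem_Icc] at hp ⊢; exact ⟨hp.2.1.two_le, hp.2.2⟩
      _ = s - 1 := by simp
  have hmiddle :
      ∏ p ∈ range (2 * n + 1) with p.Prime ∧ p ≤ 2 * n / 3, p = primorial (2 * n / 3) := by
    unfold primorial; congr 1; ext p; simp only [mem_filter, mem_range]
    exact ⟨fun h => ⟨by omega, h.2.1⟩, fun h => ⟨by omega, h.2, by omega⟩⟩
  have hlarge :
      {p ∈ range (2 * n + 1) | p.Prime ∧ n < p} = {p ∈ Ioc n (2 * n) | p.Prime} := by
    ext p; simp only [mem_filter, mem_range, mem_Ioc]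
    exact ⟨fun h => ⟨⟨h.2.2, by omega⟩, h.2.1⟩, fun h => ⟨by omega, h.2, h.1.1⟩⟩
  calc centralBinom n
      ≤ ∏ p ∈ range (2 * n + 1) with p.Prime, (if p ≤ s then 2 * n else 1) *
          ((if p ≤ 2 * n / 3 then p else 1) * (if n < p then p else 1)) :=
        hC ▸ prod_le_prod' fun p hp =>
          pow_factorization_centralBinom_le hn (mem_filter.1 hp).2.pos
    _ = (2 * n) ^ #{p ∈ range (2 * n + 1) | p.Prime ∧ p ≤ s} * primorial (2 * n / 3) *
          ∏ p ∈ Ioc n (2 * n) with p.Prime, p := by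
        rw [prod_mul_distrib, prod_mul_distrib, ← prod_filter, ← prod_filter, ← prod_filter,
          filter_filter, filter_filter, filter_filter, prod_const, hmiddle, hlarge, mul_assoc]
    _ ≤ _ := by
        gcongr
        · omega
        · exact primorial_le_four_pow _

theorem two_le_card_primes_Ioc_of_512_le {n : ℕ} (hn : 512 ≤ n) :
    2 ≤ #{p ∈ Ioc n (2 * n) | p.Prime} := by
  by_contra! hcard
  have hprod : ∏ p ∈ Ioc n (2 * n) with p.Prime, p ≤ 2 * n :=
    calc _ ≤ (2 * n) ^ #{p ∈ Ioc n (2 * n) | p.Prime} :=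
          prod_le_pow_card _ _ _ fun p hp => (mem_Ioc.1 (mem_filter.1 hp).1).2
      _ ≤ (2 * n) ^ 1 := pow_le_pow_right₀ (by omega) (by omega)
      _ = 2 * n := pow_one _
  have hs : sqrt (2 * n) ≠ 0 := by simpa [sqrt_eq_zero] using (by omega : 2 * n ≠ 0)
  have : 4 ^ n < 4 ^ n :=
    calc 4 ^ n < n * centralBinom n := four_pow_lt_mul_centralBinom n (by omega)
      _ ≤ n * ((2 * n) ^ (sqrt (2 * n) - 1) * 4 ^ (2 * n / 3) * (2 * n)) := by
        grw [centralBinom_le_mul_prod_primes_Ioc (by omega), hprod]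
      _ = n * (2 * n) ^ sqrt (2 * n) * 4 ^ (2 * n / 3) := by rw [← pow_sub_one_mul hs]; ring
      _ ≤ 4 ^ n := bertrand_main_inequality hn
  exact lt_irrefl _ this

theorem exists_two_primes_of_cover {n : ℕ} (p q m : ℕ)
    (hpq : p.Prime ∧ q.Prime ∧ p < q ∧ q < 2 * m) (hn : n < p)
    (H : n < m → ∃ p q, p.Prime ∧ q.Prime ∧ n < p ∧ p < q ∧ q < 2 * n) :
    ∃ p q, p.Prime ∧ q.Prime ∧ n < p ∧ p < q ∧ q < 2 * n := by
  by_cases hq : q < 2 * n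
  · exact ⟨p, q, hpq.1, hpq.2.1, hn, hpq.2.2.1, hq⟩
  · exact H (by omega)

theorem exists_two_primes_lt_two_mul {n : ℕ} (hn : 6 ≤ n) :
    ∃ p q, p.Prime ∧ q.Prime ∧ n < p ∧ p < q ∧ q < 2 * n := by
  rcases lt_or_ge n 512 with hsmall | hlarge
  · refine exists_two_primes_of_cover 521 523 262 (by norm_num) (by omega) fun _ => ?_
    refine exists_two_primes_of_cover 263 269 135 (by norm_num) (by omega) fun _ => ?_
    refine exists_two_primes_of_cover 137 139 70 (by norm_num) (by omega) fun _ => ?_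
    refine exists_two_primes_of_cover 71 73 37 (by norm_num) (by omega) fun _ => ?_
    refine exists_two_primes_of_cover 37 41 21 (by norm_num) (by omega) fun _ => ?_
    refine exists_two_primes_of_cover 23 29 15 (by norm_num) (by omega) fun _ => ?_
    refine exists_two_primes_of_cover 17 19 10 (by norm_num) (by omega) fun _ => ?_
    refine exists_two_primes_of_cover 11 13 7 (by norm_num) (by omega) fun _ => ?_
    exact ⟨7, 11, by norm_num, by norm_num, by omega, by norm_num, by omega⟩
  obtain ⟨a, ha, b, hb, hab⟩ := one_lt_card.1 (two_le_card_primes_Ioc_of_512_le hlarge)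
  simp only [mem_filter, mem_Ioc] at ha hb
  have h2n (q : ℕ) (hq : q.Prime) (hq2 : q ≤ 2 * n) : q < 2 * n :=
    lt_of_le_of_ne hq2 fun h => by simp_all [Nat.prime_mul_iff]
  rcases lt_or_gt_of_ne hab with h | h
  · exact ⟨a, b, ha.2, hb.2, ha.1.1, h, h2n b hb.2 hb.1.2⟩
  · exact ⟨b, a, hb.2, ha.2, hb.1.1, h, h2n a ha.2 ha.1.2⟩

end Nat

theorem next_prime_lt_two_mul (n : ℕ) (hn : 2 ≤ n) (h28 : 28 < nthPrime (n - 1)) :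
    nthPrime (n + 1) < 2 * nthPrime (n - 1) := by
  obtain ⟨k, rfl⟩ := Nat.exists_eq_add_of_le' hn
  change 28 < Nat.nth Nat.Prime k at h28
  change Nat.nth Nat.Prime (k + 1 + 1) < 2 * Nat.nth Nat.Prime k
  obtain ⟨p, q, hp, hq, hkp, hpq, hq2⟩ :=
    Nat.exists_two_primes_lt_two_mul (n := Nat.nth Nat.Prime k) (by omega)
  have hp' : Nat.nth Nat.Prime (k + 1) ≤ p := Nat.nth_succ_le_of_nth_lt hkp hp
  have hq' : Nat.nth Nat.Prime (k + 1 + 1) ≤ q := Nat.nth_succ_le_of_nth_lt (by omega) hq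
  omega
end

section
/- Let p_n denote the n-th prime (p_1 = 2, p_2 = 3, ...). For every integer n ≥ 6, p_{n-2} + p_n ≥ p_{n+2}, and this fails for n = 5 (i.e., p_3 + p_5 < p_7). Hence the least positive integer N such that p_{n-2} + p_n ≥ p_{n+2} holds for all n ≥ N is N = 6. -/
namespace Bertrand

open Real

theorem concaveOn_log_add_sqrt_add_three_mul_log_sub :
    ConcaveOn ℝ (Set.Ioi (1 / 2))
      fun x => log x + (√(2 * x) + 3) * log (2 * x) - log 4 / 3 * x := by
  have hdouble : Set.Ioi (1 / 2 : ℝ) ⊆ (fun x => 2 * x) ⁻¹' Set.Ioi 1 := fun x hx => by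
    simp only [Set.mem_preimage, Set.mem_Ioi] at hx ⊢; linarith
  have hlog : ConcaveOn ℝ (Set.Ioi (1 / 2)) log :=
    strictConcaveOn_log_Ioi.concaveOn.subset (Set.Ioi_subset_Ioi (by norm_num)) (convex_Ioi _)
  have hdilate {g : ℝ → ℝ} (hg : ConcaveOn ℝ (Set.Ioi 1) g) :
      ConcaveOn ℝ (Set.Ioi (1 / 2)) fun x => g (2 * x) :=
    (hg.comp_linearMap ((2 : ℝ) • LinearMap.id)).subset hdouble (convex_Ioi _)
  have hlog2 := hdilate (strictConcaveOn_log_Ioi.concaveOn.subset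
    (Set.Ioi_subset_Ioi zero_le_one) (convex_Ioi _))
  have hsqrt := hdilate strictConcaveOn_sqrt_mul_log_Ioi.concaveOn
  simp only [add_mul]
  exact ((hlog.add (hsqrt.add (hlog2.smul (by norm_num : (0 : ℝ) ≤ 3)))).sub
    ((convexOn_id (convex_Ioi _)).smul (by positivity)))

theorem real_main_inequality_add_three {x : ℝ} (hx : 648 ≤ x) :
    x * (2 * x) ^ (√(2 * x) + 3) * 4 ^ (2 * x / 3) ≤ 4 ^ x := by
  set f : ℝ → ℝ := fun x => log x + (√(2 * x) + 3) * log (2 * x) - log 4 / 3 * x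
  have hf : ∀ x > 0,
      f x = log (x * (2 * x) ^ (√(2 * x) + 3) * 4 ^ (2 * x / 3)) - log (4 ^ x) := by
    intro x hx
    rw [log_mul (by positivity) (by positivity), log_mul (by positivity) (by positivity),
      log_rpow (by positivity), log_rpow (by positivity), log_rpow (by positivity)]
    ring
  -- At the test points 18 and 648 = 2 * 18 ^ 2 the exponent `√(2 * x) + 3` is an integer.
  have h18 : 0 ≤ f 18 := by
    have hsqrt : √(2 * 18 : ℝ) = 6 := by
      rw [sqrt_eq_iff_mul_self_eq_of_pos] <;> norm_num
    rw [hf 18 (by norm_num), sub_nonneg, log_le_log_iff (by positivity) (by positivity), hsqrt]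
    norm_num
  have h648 : f 648 ≤ 0 := by
    have hsqrt : √(2 * 648 : ℝ) = 36 := by
      rw [sqrt_eq_iff_mul_self_eq_of_pos] <;> norm_num
    rw [hf 648 (by norm_num), sub_nonpos, log_le_log_iff (by positivity) (by positivity), hsqrt]
    norm_num
    rw [show (4 : ℝ) ^ 648 = 4 ^ 216 * 4 ^ 432 by rw [← pow_add]]
    gcongr
    norm_num
  have hfx : f x ≤ 0 :=
    (concaveOn_log_add_sqrt_add_three_mul_log_sub.right_le_of_le_left''
      (by norm_num : (18 : ℝ) ∈ Set.Ioi (1 / 2)) (by simp only [Set.mem_Ioi]; linarith)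
      (by norm_num : (18 : ℝ) < 648) hx (h648.trans h18)).trans h648
  rwa [hf x (by linarith), sub_nonpos, log_le_log_iff (by positivity) (by positivity)] at hfx

end Bertrand

open Finset
open scoped Nat.Prime

namespace Nat

theorem bertrand_main_inequality_add_three {n : ℕ} (hn : 648 ≤ n) :
    n * (2 * n) ^ (sqrt (2 * n) + 3) * 4 ^ (2 * n / 3) ≤ 4 ^ n := by
  rw [← @cast_le ℝ]
  simp only [cast_add, cast_mul, cast_pow, ← Real.rpow_natCast, cast_ofNat]
  refine le_trans ?_ (Bertrand.real_main_inequality_add_three (by exact_mod_cast hn))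
  have h2n : (1 : ℝ) ≤ 2 * n := by norm_cast; omega
  gcongr
  · exact_mod_cast Real.nat_sqrt_le_real_sqrt
  · norm_num
  · exact cast_div_le.trans (by norm_cast)

theorem prod_pow_factorization_centralBinom_range_le {n : ℕ} (hn : n ≠ 0) :
    ∏ p ∈ range (2 * n / 3 + 1), p ^ (centralBinom n).factorization p ≤
      (2 * n) ^ sqrt (2 * n) * 4 ^ (2 * n / 3) := by
  set f := fun p => p ^ (centralBinom n).factorization p
  set S := {p ∈ range (2 * n / 3 + 1) | p.Prime}
  have hS : ∏ p ∈ S, f p = ∏ p ∈ range (2 * n / 3 + 1), f p :=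
    prod_filter_of_ne fun p _ hp => by
      contrapose! hp
      simp [f, factorization_eq_zero_of_not_prime _ hp]
  rw [← hS, ← prod_filter_mul_prod_filter_not S (· ≤ sqrt (2 * n))]
  gcongr ?_ * ?_
  · have hcard : #{p ∈ S | p ≤ sqrt (2 * n)} ≤ sqrt (2 * n) := by
      refine (card_le_card fun p hp => ?_).trans (Nat.card_Ioc 0 (sqrt (2 * n))).le
      simp only [S, mem_filter, mem_range] at hp
      simp only [mem_Ioc]
      exact ⟨hp.1.2.pos, hp.2⟩
    calc ∏ p ∈ S with p ≤ sqrt (2 * n), f p ≤ ∏ p ∈ S with p ≤ sqrt (2 * n), 2 * n :=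
          prod_le_prod' fun p _ => pow_factorization_choose_le (by omega)
      _ = (2 * n) ^ #{p ∈ S | p ≤ sqrt (2 * n)} := prod_const _
      _ ≤ (2 * n) ^ sqrt (2 * n) := pow_le_pow_right₀ (by omega) hcard
  · calc ∏ p ∈ S with ¬p ≤ sqrt (2 * n), f p ≤ ∏ p ∈ S with ¬p ≤ sqrt (2 * n), p :=
          prod_le_prod' fun p hp => by
            simp only [S, mem_filter, mem_range, not_le] at hp
            have hexp : (centralBinom n).factorization p ≤ 1 :=
              factorization_choose_le_one (sqrt_lt'.mp hp.2)
            exact (pow_le_pow_right₀ hp.1.2.one_le hexp).trans (pow_one p).le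
      _ ≤ ∏ p ∈ S, p := prod_le_prod_of_subset_of_one_le' (filter_subset _ _)
          fun p hp _ => (mem_filter.mp hp).2.one_le
      _ ≤ 4 ^ (2 * n / 3) := primorial_le_four_pow _

theorem prod_pow_factorization_centralBinom_Ico_le {n k : ℕ} (hn : 2 < n)
    (h : #{p ∈ Ioc n (2 * n) | p.Prime} ≤ k) :
    ∏ p ∈ Ico (2 * n / 3 + 1) (2 * n + 1), p ^ (centralBinom n).factorization p ≤
      (2 * n) ^ k := by
  set T := {p ∈ Ioc n (2 * n) | p.Prime}
  have hsub : T ⊆ Ico (2 * n / 3 + 1) (2 * n + 1) := fun p hp => by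
    simp only [T, mem_filter, mem_Ioc] at hp
    simp only [mem_Ico]
    omega
  rw [← prod_subset hsub fun p hp hpT => ?_]
  · calc ∏ p ∈ T, p ^ (centralBinom n).factorization p ≤ ∏ p ∈ T, 2 * n :=
          prod_le_prod' fun p _ => pow_factorization_choose_le (by omega)
      _ = (2 * n) ^ #T := prod_const _
      _ ≤ (2 * n) ^ k := pow_le_pow_right₀ (by omega) h
  · simp only [T, mem_filter, mem_Ioc, mem_Ico, not_and] at hp hpT
    have hzero : (centralBinom n).factorization p = 0 := by
      by_cases hp' : p.Prime
      · exact factorization_centralBinom_of_two_mul_self_lt_three_mul hn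
          (by by_contra!; exact hpT ⟨this, by omega⟩ hp') (by omega)
      · exact factorization_eq_zero_of_not_prime _ hp'
    rw [hzero, pow_zero]

theorem centralBinom_le_of_card_primes_Ioc_le {n k : ℕ} (hn : 2 < n)
    (h : #{p ∈ Ioc n (2 * n) | p.Prime} ≤ k) :
    centralBinom n ≤ (2 * n) ^ (sqrt (2 * n) + k) * 4 ^ (2 * n / 3) := by
  rw [← prod_pow_factorization_centralBinom,
    ← prod_range_mul_prod_Ico _ (show 2 * n / 3 + 1 ≤ 2 * n + 1 by omega), pow_add, mul_right_comm]
  exact Nat.mul_le_mul (prod_pow_factorization_centralBinom_range_le (by omega))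
    (prod_pow_factorization_centralBinom_Ico_le hn h)

theorem four_le_card_primes_Ioc_of_648_le {n : ℕ} (hn : 648 ≤ n) :
    4 ≤ #{p ∈ Ioc n (2 * n) | p.Prime} := by
  by_contra! h
  have hupper : n * centralBinom n ≤ 4 ^ n := calc
    n * centralBinom n ≤ n * ((2 * n) ^ (sqrt (2 * n) + 3) * 4 ^ (2 * n / 3)) :=
      Nat.mul_le_mul_left n (centralBinom_le_of_card_primes_Ioc_le (by omega) (by omega))
    _ ≤ 4 ^ n := by rw [← mul_assoc]; exact bertrand_main_inequality_add_three hn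
  exact hupper.not_gt (four_pow_lt_mul_centralBinom n (by omega))

theorem le_card_primes_Ioc_of_chain {q : ℕ → ℕ} {m j x : ℕ}
    (hmono : StrictMonoOn q (Set.Iic (m + j))) (hprime : ∀ i ≤ m + j, (q i).Prime)
    (hgap : ∀ i ≤ m, q (i + j) ≤ 2 * q i) (h0 : q 0 ≤ x) (hx : x < q (m + 1)) :
    j ≤ #{p ∈ Ioc x (2 * x) | p.Prime} := by
  have hex : ∃ i, x < q (i + 1) := ⟨m, hx⟩
  set i := Nat.find hex
  have him : i ≤ m := Nat.find_min' hex hx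
  have hqi : q i ≤ x := by
    rcases Nat.eq_zero_or_pos i with hi | hi
    · rwa [hi]
    · have := Nat.find_min hex (show i - 1 < i by omega)
      rwa [Nat.sub_add_cancel hi, not_lt] at this
  have hmem : ∀ t ∈ Icc (i + 1) (i + j), t ∈ Set.Iic (m + j) := fun t ht => by
    simp only [mem_Icc] at ht
    simp only [Set.mem_Iic]
    omega
  calc j = #(Icc (i + 1) (i + j)) := by simp
    _ = #((Icc (i + 1) (i + j)).image q) :=
      (Finset.card_image_of_injOn (hmono.injOn.mono fun t ht => hmem t ht)).symm
    _ ≤ #{p ∈ Ioc x (2 * x) | p.Prime} := card_le_card fun p hp => by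
      obtain ⟨t, ht, rfl⟩ := mem_image.mp hp
      have ht' := mem_Icc.mp ht
      have hlow : q (i + 1) ≤ q t := hmono.monotoneOn (hmem _ (by simp; omega)) (hmem t ht) ht'.1
      have hup : q t ≤ q (i + j) :=
        hmono.monotoneOn (hmem t ht) (hmem _ (by simp; omega)) ht'.2
      simp only [mem_filter, mem_Ioc]
      exact ⟨⟨(Nat.find_spec hex).trans_le hlow, hup.trans ((hgap i him).trans (by omega))⟩,
        hprime t (hmem t ht)⟩

theorem four_le_card_primes_Ioc {x : ℕ} (hx : 17 ≤ x) :
    4 ≤ #{p ∈ Ioc x (2 * x) | p.Prime} := by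
  rcases le_or_gt 648 x with hlarge | hsmall
  · exact four_le_card_primes_Ioc_of_648_le hlarge
  -- From 31 on, each entry is the largest prime at most twice the entry four places earlier.
  let q := fun i => [17, 19, 23, 29, 31, 37, 43, 53, 61, 73, 83, 103, 113, 139, 163, 199, 223,
    277, 317, 397, 443, 547, 631, 787, 883, 1093, 1259].getD i 0
  refine le_card_primes_Ioc_of_chain (q := q) (m := 22) ?_ ?_ ?_ hx
    (by simpa [q] using hsmall.trans (by norm_num))
  · exact strictMonoOn_Iic_of_lt_succ (by decide)
  · intro i hi
    interval_cases i <;> norm_num [q]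
  · decide

theorem nth_prime_five_eq_thirteen : nth Nat.Prime 5 = 13 :=
  nth_count (p := Nat.Prime) (n := 13) (by norm_num)

theorem nth_prime_six_eq_seventeen : nth Nat.Prime 6 = 17 :=
  nth_count (p := Nat.Prime) (n := 17) (by norm_num)

theorem nth_prime_seven_eq_nineteen : nth Nat.Prime 7 = 19 :=
  nth_count (p := Nat.Prime) (n := 19) (by norm_num)

theorem nth_prime_eight_eq_twentythree : nth Nat.Prime 8 = 23 :=
  nth_count (p := Nat.Prime) (n := 23) (by norm_num)

theorem nth_prime_nine_eq_twentynine : nth Nat.Prime 9 = 29 :=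
  nth_count (p := Nat.Prime) (n := 29) (by norm_num)

theorem primeCounting_add_card_primes_Ioc {a b : ℕ} (hab : a ≤ b) :
    π a + #{p ∈ Ioc a b | p.Prime} = π b := by
  rw [← primesLE_card_eq_primeCounting, ← primesLE_card_eq_primeCounting,
    primesLE_eq_filter_Ioc_zero, primesLE_eq_filter_Ioc_zero,
    ← card_union_of_disjoint (disjoint_filter_filter (Ioc_disjoint_Ioc_of_le le_rfl)),
    ← filter_union, Ioc_union_Ioc_eq_Ioc (zero_le a) hab]

theorem primeCounting_nth_prime (k : ℕ) : π (nth Nat.Prime k) = k + 1 :=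
  count_nth_succ_of_infinite infinite_setOfPred_prime k

theorem nth_prime_add_le_of_le_card_primes_Ioc {k j m : ℕ} (hj : j ≠ 0)
    (h : j ≤ #{p ∈ Ioc (nth Nat.Prime k) m | p.Prime}) : nth Nat.Prime (k + j) ≤ m := by
  have hkm : nth Nat.Prime k ≤ m := by
    by_contra! hlt
    rw [Ioc_eq_empty_of_le hlt.le, filter_empty, card_empty] at h
    omega
  have hcount := primeCounting_add_card_primes_Ioc hkm
  rw [primeCounting_nth_prime] at hcount
  exact Nat.lt_succ_iff.mp (nth_lt_of_lt_count (show k + j < π m by omega))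

theorem nth_prime_add_four_le_two_mul {k : ℕ} (hk : 17 ≤ nth Nat.Prime k) :
    nth Nat.Prime (k + 4) ≤ 2 * nth Nat.Prime k :=
  nth_prime_add_le_of_le_card_primes_Ioc (by norm_num) (four_le_card_primes_Ioc hk)

theorem nth_prime_add_four_le_add {k : ℕ} (hk : 3 ≤ k) :
    nth Nat.Prime (k + 4) ≤ nth Nat.Prime k + nth Nat.Prime (k + 2) := by
  rcases lt_or_ge k 6 with hsmall | hlarge
  · interval_cases k <;> simp [nth_prime_five_eq_thirteen, nth_prime_six_eq_seventeen,
      nth_prime_seven_eq_nineteen, nth_prime_eight_eq_twentythree, nth_prime_nine_eq_twentynine]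
  · have h17 : 17 ≤ nth Nat.Prime k :=
      nth_prime_six_eq_seventeen ▸ nth_monotone infinite_setOfPred_prime hlarge
    have hmono : nth Nat.Prime k ≤ nth Nat.Prime (k + 2) :=
      nth_monotone infinite_setOfPred_prime (by omega)
    linarith [nth_prime_add_four_le_two_mul h17]

end Nat

theorem N_two_two_eq_six :
    (∀ n : ℕ, 6 ≤ n → nthPrime (n - 2) + nthPrime n ≥ nthPrime (n + 2)) ∧
    nthPrime 3 + nthPrime 5 < nthPrime 7 ∧
    IsLeast {N : ℕ | 0 < N ∧ ∀ n : ℕ, N ≤ n →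
      nthPrime (n - 2) + nthPrime n ≥ nthPrime (n + 2)} 6 := by
  have hge : ∀ n : ℕ, 6 ≤ n → nthPrime (n - 2) + nthPrime n ≥ nthPrime (n + 2) := by
    intro n hn
    obtain ⟨k, rfl⟩ : ∃ k, n = k + 3 := ⟨n - 3, by omega⟩
    rw [ge_iff_le, nthPrime, nthPrime, nthPrime, show k + 3 - 2 - 1 = k by omega,
      show k + 3 - 1 = k + 2 by omega, show k + 3 + 2 - 1 = k + 4 by omega]
    exact Nat.nth_prime_add_four_le_add (by omega : 3 ≤ k)
  have hfail : nthPrime 3 + nthPrime 5 < nthPrime 7 := by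
    norm_num [nthPrime, Nat.nth_prime_six_eq_seventeen]
  refine ⟨hge, hfail, ⟨⟨by norm_num, hge⟩, fun N ⟨_, hN⟩ => ?_⟩⟩
  by_contra! hlt
  exact (hN 5 (by omega)).not_gt hfail
end

section
/- Let p_n denote the n-th prime (p_1 = 2, p_2 = 3, ...). For every integer n ≥ 10, p_{n-3} + p_n ≥ p_{n+3}, and this fails for n = 9 (i.e., p_6 + p_9 < p_{12}). Hence the least positive integer N such that p_{n-3} + p_n ≥ p_{n+3} holds for all n ≥ N is N = 10. -/
/-!
If the interval `(x, 2x]` contains at least six primes whenever `x ≥ 24`, then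
`p_{n+3} ≤ 2 p_{n-3} ≤ p_{n-3} + p_n` as soon as `p_{n-3} ≥ 29`, i.e. for `n ≥ 13`; the cases
`n = 10, 11, 12` and the failure `p_6 + p_9 = 36 < 37 = p_12` are read off the first fifteen primes.

The six primes come from Erdős's proof of Bertrand's postulate, keeping track of the primes in
`(x, 2x]`: each divides `C(2x, x)` at most to a power `≤ 2x`, so with at most five of them
`4^x / x < C(2x, x) ≤ (2x)^(√(2x) + 5) 4^(2x/3)`, which is false for `x ≥ 4^7`. Below `4^7` the
claim is covered by a chain of intervals `[a, b)` each with six explicit primes in `[b, 2a]`.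
-/

open Finset Nat

namespace Nat

theorem prod_pow_factorization_centralBinom_small_le {n : ℕ} (hn : 0 < n) :
    ∏ p ∈ range (2 * n / 3 + 1), p ^ (centralBinom n).factorization p ≤
      (2 * n) ^ sqrt (2 * n) * 4 ^ (2 * n / 3) := by
  set f := fun p ↦ p ^ (centralBinom n).factorization p
  have h_primes : ∏ p ∈ range (2 * n / 3 + 1) with p.Prime, f p =
      ∏ p ∈ range (2 * n / 3 + 1), f p := prod_filter_of_ne fun p _ hfp ↦ by
    by_contra hp
    simp [f, factorization_eq_zero_of_not_prime _ hp] at hfp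
  rw [← h_primes, ← prod_filter_mul_prod_filter_not _ (· ≤ sqrt (2 * n))]
  gcongr
  · calc ∏ p ∈ {p ∈ range (2 * n / 3 + 1) | p.Prime} with p ≤ sqrt (2 * n), f p
        ≤ (2 * n) ^ #{p ∈ {p ∈ range (2 * n / 3 + 1) | p.Prime} | p ≤ sqrt (2 * n)} :=
          prod_le_pow_card _ _ _ fun p _ ↦ pow_factorization_choose_le (by omega)
      _ ≤ (2 * n) ^ sqrt (2 * n) := by
          refine pow_le_pow_right₀ (by omega) ?_
          calc _ ≤ #(Icc 1 (sqrt (2 * n))) := card_le_card fun p hp ↦ by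
                  simp only [mem_filter] at hp
                  exact mem_Icc.2 ⟨hp.1.2.one_lt.le, hp.2⟩
            _ = sqrt (2 * n) := by simp
  · calc ∏ p ∈ {p ∈ range (2 * n / 3 + 1) | p.Prime} with ¬p ≤ sqrt (2 * n), f p
        ≤ ∏ p ∈ {p ∈ range (2 * n / 3 + 1) | p.Prime} with ¬p ≤ sqrt (2 * n), p :=
          prod_le_prod' fun p hp ↦ by
            simp only [mem_filter, not_le] at hp
            calc f p ≤ p ^ 1 := pow_le_pow_right₀ hp.1.2.one_lt.le
                  (factorization_choose_le_one (sqrt_lt'.1 hp.2))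
              _ = p := pow_one p
      _ ≤ primorial (2 * n / 3) :=
          prod_le_prod_of_subset_of_one_le' (filter_subset _ _) fun p hp _ ↦
            (mem_filter.1 hp).2.one_lt.le
      _ ≤ 4 ^ (2 * n / 3) := primorial_le_four_pow _

theorem prod_pow_factorization_centralBinom_large_le {n : ℕ} (hn : 2 < n) :
    ∏ p ∈ Ico (2 * n / 3 + 1) (2 * n + 1), p ^ (centralBinom n).factorization p ≤
      (2 * n) ^ #{p ∈ Ioc n (2 * n) | p.Prime} := by
  rw [← prod_subset (s₁ := {p ∈ Ioc n (2 * n) | p.Prime})]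
  · exact prod_le_pow_card _ _ _ fun p _ ↦ pow_factorization_choose_le (by omega)
  · intro p hp
    simp only [mem_filter, mem_Ioc] at hp
    exact mem_Ico.2 ⟨by omega, by omega⟩
  · intro p hp hp_small
    rw [mem_Ico] at hp
    by_cases hprime : p.Prime
    · have hpn : p ≤ n := by
        by_contra h
        exact hp_small (mem_filter.2 ⟨mem_Ioc.2 ⟨by omega, by omega⟩, hprime⟩)
      rw [factorization_centralBinom_of_two_mul_self_lt_three_mul hn hpn (by omega), pow_zero]
    · rw [factorization_eq_zero_of_not_prime _ hprime, pow_zero]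

theorem centralBinom_le_mul_pow_card_primes {n : ℕ} (hn : 2 < n) :
    centralBinom n ≤ (2 * n) ^ sqrt (2 * n) * 4 ^ (2 * n / 3) *
      (2 * n) ^ #{p ∈ Ioc n (2 * n) | p.Prime} := by
  rw [← prod_pow_factorization_centralBinom,
    ← prod_range_mul_prod_Ico _ (show 2 * n / 3 + 1 ≤ 2 * n + 1 by omega)]
  exact mul_le_mul' (prod_pow_factorization_centralBinom_small_le (by omega))
    (prod_pow_factorization_centralBinom_large_le hn)

theorem count_add_card_filter_Ioc (p : ℕ → Prop) [DecidablePred p] {a b : ℕ} (hab : a ≤ b) :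
    count p (a + 1) + #{k ∈ Ioc a b | p k} = count p (b + 1) := by
  rw [count_eq_card_filter_range, count_eq_card_filter_range, ← card_union_of_disjoint,
    ← filter_union, range_eq_Ico, range_eq_Ico, ← Ico_add_one_add_one_eq_Ioc,
    Ico_union_Ico_eq_Ico (by omega) (by omega)]
  exact disjoint_filter_filter <| disjoint_left.2 fun x hx hx' ↦ by
    simp only [mem_range, mem_Ioc] at hx hx'
    omega

theorem nth_add_le_of_le_card_filter_Ioc {p : ℕ → Prop} [DecidablePred p]
    (hp : (Set.ofPred p).Infinite) {i k b : ℕ} (hb : nth p i ≤ b)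
    (hk : k ≤ #{m ∈ Ioc (nth p i) b | p m}) : nth p (i + k) ≤ b := by
  have hcount := count_add_card_filter_Ioc p hb
  rw [count_nth_succ_of_infinite hp] at hcount
  exact Nat.lt_succ_iff.1 (nth_lt_of_lt_count (n := b + 1) (by omega))

theorem nth_prime_eq_of_count {k q : ℕ} (hq : q.Prime) (hk : count Nat.Prime q = k) :
    nth Nat.Prime k = q :=
  hk ▸ nth_count hq

end Nat

theorem nine_mul_le_two_mul_four_pow {j : ℕ} (hj : 7 ≤ j) :
    9 * (2 * j + 3) * (2 ^ j + 2) ≤ 2 * 4 ^ j := by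
  induction j, hj using Nat.le_induction with
  | base => norm_num
  | succ j _ ih =>
    rw [pow_succ, pow_succ]
    nlinarith [Nat.one_le_two_pow (n := j)]

theorem mul_pow_sqrt_add_five_mul_four_pow_le {n : ℕ} (hn : 4 ^ 7 ≤ n) :
    n * (2 * n) ^ (sqrt (2 * n) + 5) * 4 ^ (2 * n / 3) ≤ 4 ^ n := by
  set j := Nat.log 4 n
  have hj : 7 ≤ j := le_log_of_pow_le (by norm_num) hn
  have hn_lo : 4 ^ j ≤ n := pow_log_le_self 4 (by omega)
  have hn_hi : n < 4 * 4 ^ j := by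
    simpa [pow_succ, mul_comm] using lt_pow_succ_log_self (by norm_num : 1 < 4) n
  have h2n : 2 * n ≤ 2 ^ (2 * j + 3) := by
    rw [pow_add, pow_mul]
    norm_num
    omega
  have hsqrt : sqrt (2 * n) ≤ 3 * 2 ^ j := by
    refine (sqrt_lt'.2 ?_).le
    rw [mul_pow, ← pow_mul, mul_comm j, pow_mul]
    norm_num
    omega
  have hexp : (2 * j + 3) * (3 * 2 ^ j + 6) ≤ 2 * (n - 2 * n / 3) := by
    have hbound := nine_mul_le_two_mul_four_pow hj
    have hfactor : 3 * ((2 * j + 3) * (3 * 2 ^ j + 6)) = 9 * (2 * j + 3) * (2 ^ j + 2) := by ring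
    omega
  calc n * (2 * n) ^ (sqrt (2 * n) + 5) * 4 ^ (2 * n / 3)
      ≤ (2 * n) * (2 * n) ^ (sqrt (2 * n) + 5) * 4 ^ (2 * n / 3) := by gcongr; omega
    _ = (2 * n) ^ (sqrt (2 * n) + 6) * 4 ^ (2 * n / 3) := by ring
    _ ≤ (2 ^ (2 * j + 3)) ^ (3 * 2 ^ j + 6) * 4 ^ (2 * n / 3) := by gcongr; omega
    _ ≤ 2 ^ (2 * (n - 2 * n / 3)) * 4 ^ (2 * n / 3) := by
        rw [← pow_mul]
        gcongr
        norm_num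
    _ = 4 ^ n := by
        rw [pow_mul, show (2 : ℕ) ^ 2 = 4 by rfl, ← pow_add]
        congr 1
        omega

theorem six_le_card_primes_Ioc_two_mul_of_large {n : ℕ} (hn : 4 ^ 7 ≤ n) :
    6 ≤ #{p ∈ Ioc n (2 * n) | p.Prime} := by
  by_contra! hcard
  have hbinom : n * centralBinom n ≤ n * (2 * n) ^ (sqrt (2 * n) + 5) * 4 ^ (2 * n / 3) :=
    calc n * centralBinom n
        ≤ n * ((2 * n) ^ sqrt (2 * n) * 4 ^ (2 * n / 3) * (2 * n) ^ 5) := by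
          grw [centralBinom_le_mul_pow_card_primes (by omega)]
          gcongr <;> omega
      _ = n * (2 * n) ^ (sqrt (2 * n) + 5) * 4 ^ (2 * n / 3) := by ring
  have hlower := four_pow_lt_mul_centralBinom n (by omega)
  have hupper := mul_pow_sqrt_add_five_mul_four_pow_le hn
  omega

theorem le_card_primes_Ioc_two_mul_of_primes {k n b : ℕ} (a : ℕ) (l : List ℕ) (hl : l.Nodup)
    (hk : k ≤ l.length) (hq : ∀ q ∈ l, q.Prime ∧ b ≤ q ∧ q ≤ 2 * a)
    (hbelow : n < a → k ≤ #{p ∈ Ioc n (2 * n) | p.Prime}) :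
    n < b → k ≤ #{p ∈ Ioc n (2 * n) | p.Prime} := by
  intro hnb
  by_cases hna : n < a
  · exact hbelow hna
  rw [← List.toFinset_card_of_nodup hl] at hk
  refine hk.trans (card_le_card fun q hq' ↦ ?_)
  obtain ⟨hprime, hbq, hqa⟩ := hq q (List.mem_toFinset.1 hq')
  exact mem_filter.2 ⟨mem_Ioc.2 ⟨by omega, by omega⟩, hprime⟩

theorem six_le_card_primes_Ioc_two_mul {n : ℕ} (hn : 24 ≤ n) :
    6 ≤ #{p ∈ Ioc n (2 * n) | p.Prime} := by
  obtain hlarge | hsmall := le_or_gt (4 ^ 7) n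
  · exact six_le_card_primes_Ioc_two_mul_of_large hlarge
  revert hsmall
  refine le_card_primes_Ioc_two_mul_of_primes 16381 [32693, 32707, 32713, 32717, 32719, 32749]
    (by decide) (by decide) (by norm_num) ?_
  refine le_card_primes_Ioc_two_mul_of_primes 8219 [16381, 16411, 16417, 16421, 16427, 16433]
    (by decide) (by decide) (by norm_num) ?_
  refine le_card_primes_Ioc_two_mul_of_primes 4129 [8219, 8221, 8231, 8233, 8237, 8243]
    (by decide) (by decide) (by norm_num) ?_
  refine le_card_primes_Ioc_two_mul_of_primes 2083 [4129, 4133, 4139, 4153, 4157, 4159]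
    (by decide) (by decide) (by norm_num) ?_
  refine le_card_primes_Ioc_two_mul_of_primes 1061 [2083, 2087, 2089, 2099, 2111, 2113]
    (by decide) (by decide) (by norm_num) ?_
  refine le_card_primes_Ioc_two_mul_of_primes 547 [1061, 1063, 1069, 1087, 1091, 1093]
    (by decide) (by decide) (by norm_num) ?_
  refine le_card_primes_Ioc_two_mul_of_primes 293 [547, 557, 563, 569, 571, 577]
    (by decide) (by decide) (by norm_num) ?_
  refine le_card_primes_Ioc_two_mul_of_primes 167 [293, 307, 311, 313, 317, 331]
    (by decide) (by decide) (by norm_num) ?_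
  refine le_card_primes_Ioc_two_mul_of_primes 97 [167, 173, 179, 181, 191, 193]
    (by decide) (by decide) (by norm_num) ?_
  refine le_card_primes_Ioc_two_mul_of_primes 59 [97, 101, 103, 107, 109, 113]
    (by decide) (by decide) (by norm_num) ?_
  refine le_card_primes_Ioc_two_mul_of_primes 41 [59, 61, 67, 71, 73, 79]
    (by decide) (by decide) (by norm_num) ?_
  refine le_card_primes_Ioc_two_mul_of_primes 31 [41, 43, 47, 53, 59, 61]
    (by decide) (by decide) (by norm_num) ?_
  refine le_card_primes_Ioc_two_mul_of_primes 29 [31, 37, 41, 43, 47, 53]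
    (by decide) (by decide) (by norm_num) ?_
  refine le_card_primes_Ioc_two_mul_of_primes 24 [29, 31, 37, 41, 43, 47]
    (by decide) (by decide) (by norm_num) ?_
  omega

theorem nth_prime_of_lt_fifteen {k : ℕ} (hk : k < 15) :
    nth Nat.Prime k = [2, 3, 5, 7, 11, 13, 17, 19, 23, 29, 31, 37, 41, 43, 47].getD k 0 := by
  interval_cases k <;> exact nth_prime_eq_of_count (by norm_num) (by decide)

theorem nth_prime_add_six_le_two_mul {i : ℕ} (hi : 9 ≤ i) :
    nth Nat.Prime (i + 6) ≤ 2 * nth Nat.Prime i := by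
  have h29 : 29 ≤ nth Nat.Prime i := by
    simpa [nth_prime_of_lt_fifteen] using
      (nth_le_nth infinite_setOfPred_prime).2 hi
  exact nth_add_le_of_le_card_filter_Ioc (p := Nat.Prime) infinite_setOfPred_prime (by omega)
    (six_le_card_primes_Ioc_two_mul (by omega))

theorem N_three_three_eq_ten :
    (∀ n : ℕ, 10 ≤ n → nthPrime (n - 3) + nthPrime n ≥ nthPrime (n + 3)) ∧
    nthPrime 6 + nthPrime 9 < nthPrime 12 ∧
    IsLeast {N : ℕ | 0 < N ∧ ∀ n : ℕ, N ≤ n →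
      nthPrime (n - 3) + nthPrime n ≥ nthPrime (n + 3)} 10 := by
  have hfails : nthPrime 6 + nthPrime 9 < nthPrime 12 := by
    simp [nthPrime, nth_prime_of_lt_fifteen]
  have hholds : ∀ n : ℕ, 10 ≤ n → nthPrime (n - 3) + nthPrime n ≥ nthPrime (n + 3) := by
    intro n hn
    obtain hn12 | hn13 := le_or_gt n 12
    · interval_cases n <;> simp [nthPrime, nth_prime_of_lt_fifteen]
    have hdouble := nth_prime_add_six_le_two_mul (i := n - 4) (by omega)
    have hmono := (nth_le_nth (p := Nat.Prime) infinite_setOfPred_prime).2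
      (show n - 4 ≤ n - 1 by omega)
    simp only [nthPrime, show n + 3 - 1 = n - 4 + 6 by omega, show n - 3 - 1 = n - 4 by omega]
    omega
  refine ⟨hholds, hfails, ⟨by norm_num, hholds⟩, fun N ⟨_, hN⟩ ↦ ?_⟩
  by_contra! hN10
  exact hfails.not_ge (hN 9 (by omega))
end

section
/- Let p_n denote the n-th prime (p_1 = 2, p_2 = 3, ...). For every integer n ≥ 11, p_{n-4} + p_n ≥ p_{n+4}, and this fails for n = 10 (i.e., p_6 + p_{10} < p_{14}). Hence the least positive integer N such that p_{n-4} + p_n ≥ p_{n+4} holds for all n ≥ N is N = 11. -/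
open Finset Nat

theorem Real.concaveOn_sqrt_mul_log_add_mul_log_sub_mul_sub_const :
    ConcaveOn ℝ (Set.Ioi 1) fun x => √x * log x + 8 * log x - log 2 / 3 * x - log 2 :=
  (((strictConcaveOn_sqrt_mul_log_Ioi.concaveOn.add <|
    (strictConcaveOn_log_Ioi.concaveOn.subset (Set.Ioi_subset_Ioi zero_le_one) (convex_Ioi 1)).smul
      (by norm_num : (0 : ℝ) ≤ 8)).sub <|
    (convexOn_id (convex_Ioi 1)).smul (by positivity : 0 ≤ log 2 / 3)).sub
    (convexOn_const _ (convex_Ioi 1)))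

/-- With `x = 2 * n` this is `n * (2 * n) ^ (√(2 * n) + 7) * 4 ^ (2 * n / 3) ≤ 4 ^ n`. -/
theorem Real.rpow_sqrt_add_eight_mul_four_rpow_le {x : ℝ} (hx : 4096 ≤ x) :
    x ^ (√x + 8) * 4 ^ (x / 3) ≤ 2 ^ (x + 1) := by
  set g : ℝ → ℝ := fun x => √x * log x + 8 * log x - log 2 / 3 * x - log 2
  have hlog : log (x ^ (√x + 8) * 4 ^ (x / 3)) - log (2 ^ (x + 1)) = g x := by
    rw [log_mul (by positivity) (by positivity), log_rpow (by linarith), log_rpow (by norm_num),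
      log_rpow (by norm_num), show (4 : ℝ) = 2 ^ 2 by norm_num, log_pow]
    push_cast
    ring
  have hlog2 : 0 < log 2 := log_pos one_lt_two
  have h36 : 0 ≤ g 36 := by
    have hsqrt : √(36 : ℝ) = 6 := by rw [show (36 : ℝ) = 6 ^ 2 by norm_num, sqrt_sq (by norm_num)]
    have : log 2 ≤ log 36 := log_le_log (by norm_num) (by norm_num)
    simp only [g, hsqrt]
    linarith
  have h4096 : g 4096 ≤ 0 := by
    have hsqrt : √(4096 : ℝ) = 64 := by
      rw [show (4096 : ℝ) = 64 ^ 2 by norm_num, sqrt_sq (by norm_num)]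
    have : log (4096 : ℝ) = 12 * log 2 := by
      rw [show (4096 : ℝ) = 2 ^ 12 by norm_num, log_pow]
      norm_num
    simp only [g, hsqrt, this]
    linarith
  -- a concave function that has decreased from `36` to `4096` keeps decreasing after `4096`
  have hg : g x ≤ 0 :=
    (concaveOn_sqrt_mul_log_add_mul_log_sub_mul_sub_const.right_le_of_le_left'' (by norm_num)
      (by simp only [Set.mem_Ioi]; linarith) (by norm_num) hx (h4096.trans h36)).trans h4096
  rw [← log_le_log_iff (by positivity) (by positivity)]
  linarith

theorem pow_sqrt_add_eight_mul_four_pow_le {m : ℕ} (hm : 4096 ≤ m) :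
    m ^ (sqrt m + 8) * 4 ^ (m / 3) ≤ 2 ^ (m + 1) := by
  rw [← Nat.cast_le (α := ℝ)]
  push_cast
  calc (m : ℝ) ^ (sqrt m + 8) * 4 ^ (m / 3)
      = (m : ℝ) ^ ((sqrt m + 8 : ℕ) : ℝ) * 4 ^ ((m / 3 : ℕ) : ℝ) := by
        rw [Real.rpow_natCast, Real.rpow_natCast]
    _ ≤ (m : ℝ) ^ (√(m : ℝ) + 8) * 4 ^ ((m : ℝ) / 3) := by
      gcongr
      · exact_mod_cast (show 1 ≤ m by omega)
      · push_cast
        gcongr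
        exact Real.nat_sqrt_le_real_sqrt
      · norm_num
      · exact Nat.cast_div_le
    _ ≤ 2 ^ ((m : ℝ) + 1) := Real.rpow_sqrt_add_eight_mul_four_rpow_le (by exact_mod_cast hm)
    _ = 2 ^ (m + 1) := by exact_mod_cast Real.rpow_natCast 2 (m + 1)

theorem pow_factorization_centralBinom_le {n : ℕ} (hn : 2 < n) (p : ℕ) :
    p ^ (centralBinom n).factorization p ≤
      (if p.Prime ∧ p ≤ sqrt (2 * n) then 2 * n else 1) *
        (if p.Prime ∧ p ≤ 2 * n / 3 then p else 1) * (if p.Prime ∧ n < p then 2 * n else 1) := by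
  by_cases hp : p.Prime
  swap
  · simp [hp, factorization_eq_zero_of_not_prime]
  have hp1 := hp.one_lt.le
  have h2n : p ^ (centralBinom n).factorization p ≤ 2 * n :=
    centralBinom_eq_two_mul_choose n ▸ pow_factorization_choose_le (by omega)
  simp only [hp, true_and]
  rcases le_or_gt p (sqrt (2 * n)) with hsmall | hsmall
  · rw [if_pos hsmall]
    split_ifs <;> first | omega | nlinarith
  rcases lt_or_ge n p with hlarge | hlarge
  · rw [if_pos hlarge]
    split_ifs <;> omega
  rw [if_neg hsmall.not_ge, if_neg hlarge.not_gt, one_mul, mul_one]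
  rcases le_or_gt p (2 * n / 3) with hmid | hmid
  · rw [if_pos hmid, centralBinom_eq_two_mul_choose]
    calc p ^ _ ≤ p ^ 1 :=
          Nat.pow_le_pow_right hp1 (factorization_choose_le_one (sqrt_lt'.mp hsmall))
      _ = p := pow_one p
  · rw [factorization_centralBinom_of_two_mul_self_lt_three_mul hn hlarge (by omega),
      if_neg hmid.not_ge, pow_zero]

theorem centralBinom_le_pow_sqrt_add_card_primes_Ioc {n : ℕ} (hn : 2 < n) :
    centralBinom n ≤
      (2 * n) ^ (sqrt (2 * n) + #{p ∈ Ioc n (2 * n) | p.Prime}) * 4 ^ (2 * n / 3) := by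
  have hsmall : #{p ∈ range (2 * n + 1) | p.Prime ∧ p ≤ sqrt (2 * n)} ≤ sqrt (2 * n) := by
    calc _ ≤ #(Icc 1 (sqrt (2 * n))) := card_le_card fun p hp => by
            simp only [mem_filter, mem_Icc] at hp ⊢
            exact ⟨hp.2.1.one_lt.le, hp.2.2⟩
      _ = sqrt (2 * n) := by simp
  have hmid : {p ∈ range (2 * n + 1) | p.Prime ∧ p ≤ 2 * n / 3} =
      {p ∈ range (2 * n / 3 + 1) | p.Prime} := by
    ext p
    simp only [mem_filter, mem_range]
    grind
  have hlarge : {p ∈ range (2 * n + 1) | p.Prime ∧ n < p} = {p ∈ Ioc n (2 * n) | p.Prime} := by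
    ext p
    simp only [mem_filter, mem_range, mem_Ioc]
    grind
  calc centralBinom n = ∏ p ∈ range (2 * n + 1), p ^ (centralBinom n).factorization p :=
        (prod_pow_factorization_centralBinom n).symm
    _ ≤ ∏ p ∈ range (2 * n + 1), ((if p.Prime ∧ p ≤ sqrt (2 * n) then 2 * n else 1) *
        (if p.Prime ∧ p ≤ 2 * n / 3 then p else 1) * (if p.Prime ∧ n < p then 2 * n else 1)) :=
        prod_le_prod' fun p _ => pow_factorization_centralBinom_le hn p
    _ = (2 * n) ^ #{p ∈ range (2 * n + 1) | p.Prime ∧ p ≤ sqrt (2 * n)} * primorial (2 * n / 3) *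
        (2 * n) ^ #{p ∈ Ioc n (2 * n) | p.Prime} := by
      rw [prod_mul_distrib, prod_mul_distrib, ← prod_filter, ← prod_filter, ← prod_filter, hmid,
        hlarge, prod_const, prod_const]
      rfl
    _ ≤ (2 * n) ^ sqrt (2 * n) * 4 ^ (2 * n / 3) * (2 * n) ^ #{p ∈ Ioc n (2 * n) | p.Prime} := by
      gcongr
      · omega
      · exact primorial_le_four_pow _
    _ = _ := by ring

theorem eight_le_card_primes_Ioc_two_mul_of_le {n : ℕ} (hn : 2048 ≤ n) :
    8 ≤ #{p ∈ Ioc n (2 * n) | p.Prime} := by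
  by_contra! hfew
  have hbinom := centralBinom_le_pow_sqrt_add_card_primes_Ioc (n := n) (by omega)
  have hupper := pow_sqrt_add_eight_mul_four_pow_le (m := 2 * n) (by omega)
  refine lt_irrefl (2 * 4 ^ n) ?_
  calc
    2 * 4 ^ n < 2 * (n * centralBinom n) := by
      have := four_pow_lt_mul_centralBinom n (by omega)
      omega
    _ ≤ 2 * n * ((2 * n) ^ (sqrt (2 * n) + 7) * 4 ^ (2 * n / 3)) := by
      rw [← mul_assoc]
      gcongr
      refine hbinom.trans ?_
      gcongr <;> omega
    _ = (2 * n) ^ (sqrt (2 * n) + 8) * 4 ^ (2 * n / 3) := by ring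
    _ ≤ 2 ^ (2 * n + 1) := hupper
    _ = 2 * 4 ^ n := by rw [pow_succ, pow_mul, mul_comm]; norm_num

theorem le_card_primes_Ioc_two_mul_of_covering {k n : ℕ} (a b : ℕ) (s : Finset ℕ)
    (hs : ∀ p ∈ s, p.Prime ∧ b ≤ p ∧ p ≤ 2 * a) (hk : k ≤ #s)
    (H : b ≤ n → k ≤ #{p ∈ Ioc n (2 * n) | p.Prime}) (ha : a ≤ n) :
    k ≤ #{p ∈ Ioc n (2 * n) | p.Prime} := by
  rcases le_or_gt b n with hb | hb
  · exact H hb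
  refine hk.trans (card_le_card fun p hp => ?_)
  obtain ⟨hp, hbp, hpa⟩ := hs p hp
  simp only [mem_filter, mem_Ioc]
  exact ⟨⟨by omega, by omega⟩, hp⟩

theorem eight_le_card_primes_Ioc_two_mul {n : ℕ} (hn : 34 ≤ n) :
    8 ≤ #{p ∈ Ioc n (2 * n) | p.Prime} := by
  revert hn
  refine le_card_primes_Ioc_two_mul_of_covering 34 37 {37, 41, 43, 47, 53, 59, 61, 67}
    (by norm_num) (by decide) ?_
  refine le_card_primes_Ioc_two_mul_of_covering 37 43 {43, 47, 53, 59, 61, 67, 71, 73}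
    (by norm_num) (by decide) ?_
  refine le_card_primes_Ioc_two_mul_of_covering 43 53 {53, 59, 61, 67, 71, 73, 79, 83}
    (by norm_num) (by decide) ?_
  refine le_card_primes_Ioc_two_mul_of_covering 53 71 {71, 73, 79, 83, 89, 97, 101, 103}
    (by norm_num) (by decide) ?_
  refine le_card_primes_Ioc_two_mul_of_covering 71 103 {103, 107, 109, 113, 127, 131, 137, 139}
    (by norm_num) (by decide) ?_
  refine le_card_primes_Ioc_two_mul_of_covering 103 167 {167, 173, 179, 181, 191, 193, 197, 199}
    (by norm_num) (by decide) ?_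
  refine le_card_primes_Ioc_two_mul_of_covering 167 281 {281, 283, 293, 307, 311, 313, 317, 331}
    (by norm_num) (by decide) ?_
  refine le_card_primes_Ioc_two_mul_of_covering 281 499 {499, 503, 509, 521, 523, 541, 547, 557}
    (by norm_num) (by decide) ?_
  refine le_card_primes_Ioc_two_mul_of_covering 499 947 {947, 953, 967, 971, 977, 983, 991, 997}
    (by norm_num) (by decide) ?_
  refine le_card_primes_Ioc_two_mul_of_covering 947 1847
    {1847, 1861, 1867, 1871, 1873, 1877, 1879, 1889} (by norm_num) (by decide) ?_
  refine le_card_primes_Ioc_two_mul_of_covering 1847 2048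
    {2053, 2063, 2069, 2081, 2083, 2087, 2089, 2099} (by norm_num) (by decide) ?_
  exact eight_le_card_primes_Ioc_two_mul_of_le

theorem Nat.nth_add_le_of_le_card_filter_Ioc_s11 {p : ℕ → Prop} [DecidablePred p]
    (hp : (Set.ofPred p).Infinite) {m k c : ℕ} (hc : nth p m ≤ c)
    (hk : k ≤ #{x ∈ Ioc (nth p m) c | p x}) : nth p (m + k) ≤ c := by
  have hdisj : Disjoint {x ∈ range (nth p m + 1) | p x} {x ∈ Ioc (nth p m) c | p x} :=
    disjoint_filter_filter <| disjoint_left.mpr fun x hx hx' => by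
      simp only [mem_range, mem_Ioc] at hx hx'
      omega
  have hsub : {x ∈ range (nth p m + 1) | p x} ∪ {x ∈ Ioc (nth p m) c | p x} ⊆
      {x ∈ range (c + 1) | p x} := by
    intro x hx
    simp only [mem_union, mem_filter, mem_range, mem_Ioc] at hx ⊢
    rcases hx with ⟨hx, hpx⟩ | ⟨hx, hpx⟩ <;> exact ⟨by omega, hpx⟩
  have hcount : m + k < count p (c + 1) := by
    calc m + k < count p (nth p m + 1) + #{x ∈ Ioc (nth p m) c | p x} := by
          rw [count_nth_succ_of_infinite hp]
          omega
      _ = #({x ∈ range (nth p m + 1) | p x} ∪ {x ∈ Ioc (nth p m) c | p x}) := by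
          rw [card_union_of_disjoint hdisj, count_eq_card_filter_range]
      _ ≤ count p (c + 1) := by
          rw [count_eq_card_filter_range]
          exact card_le_card hsub
  exact Nat.lt_succ_iff.mp (nth_lt_of_lt_count hcount)

theorem nth_prime_add_eight_le_two_mul {m : ℕ} (hm : 11 ≤ m) :
    nth Nat.Prime (m + 8) ≤ 2 * nth Nat.Prime m := by
  have h37 : 37 ≤ nth Nat.Prime m := calc
    37 = nth Nat.Prime 11 := (nth_count (p := Nat.Prime) (n := 37) (by norm_num)).symm
    _ ≤ nth Nat.Prime m := (nth_le_nth infinite_setOfPred_prime).mpr hm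
  exact nth_add_le_of_le_card_filter_Ioc_s11 (p := Nat.Prime) infinite_setOfPred_prime (by omega)
    (eight_le_card_primes_Ioc_two_mul (by omega))

theorem nthPrime_eq_of_count_add_one_eq {k v : ℕ} (hv : v.Prime)
    (h : count Nat.Prime v + 1 = k) : nthPrime k = v := by
  rw [nthPrime, ← h, Nat.add_sub_cancel, nth_count hv]

theorem nthPrime_six_to_nineteen :
    nthPrime 6 = 13 ∧ nthPrime 7 = 17 ∧ nthPrime 8 = 19 ∧ nthPrime 9 = 23 ∧ nthPrime 10 = 29 ∧
      nthPrime 11 = 31 ∧ nthPrime 12 = 37 ∧ nthPrime 13 = 41 ∧ nthPrime 14 = 43 ∧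
      nthPrime 15 = 47 ∧ nthPrime 16 = 53 ∧ nthPrime 17 = 59 ∧ nthPrime 18 = 61 ∧
      nthPrime 19 = 67 := by
  and_intros <;> exact nthPrime_eq_of_count_add_one_eq (by norm_num) (by decide)

theorem nthPrime_add_four_le {n : ℕ} (hn : 11 ≤ n) :
    nthPrime (n + 4) ≤ nthPrime (n - 4) + nthPrime n := by
  rcases le_or_gt 16 n with hlarge | hsmall
  · have h8 := nth_prime_add_eight_le_two_mul (m := n - 5) (by omega)
    have hmono : nth Nat.Prime (n - 5) ≤ nth Nat.Prime (n - 1) :=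
      (nth_le_nth infinite_setOfPred_prime).mpr (by omega)
    rw [nthPrime, nthPrime, nthPrime, show n + 4 - 1 = n - 5 + 8 by omega,
      show n - 4 - 1 = n - 5 by omega]
    omega
  · obtain ⟨-, h7, h8, h9, h10, h11, h12, h13, h14, h15, h16, h17, h18, h19⟩ :=
      nthPrime_six_to_nineteen
    interval_cases n <;> simp only [*] <;> norm_num

theorem N_four_four_eq_eleven :
    (∀ n : ℕ, 11 ≤ n → nthPrime (n - 4) + nthPrime n ≥ nthPrime (n + 4)) ∧
    nthPrime 6 + nthPrime 10 < nthPrime 14 ∧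
    IsLeast {N : ℕ | 0 < N ∧ ∀ n : ℕ, N ≤ n →
      nthPrime (n - 4) + nthPrime n ≥ nthPrime (n + 4)} 11 := by
  have hfail : nthPrime 6 + nthPrime 10 < nthPrime 14 := by
    obtain ⟨h6, -, -, -, h10, -, -, -, h14, -⟩ := nthPrime_six_to_nineteen
    rw [h6, h10, h14]
    norm_num
  refine ⟨fun n => nthPrime_add_four_le, hfail, ⟨by norm_num, fun n => nthPrime_add_four_le⟩, ?_⟩
  rintro N ⟨-, hN⟩
  by_contra! hN10
  exact (hN 10 (by omega)).not_gt hfail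
end

section
/- Let p_n denote the n-th prime (p_1 = 2, p_2 = 3, ...). For every integer n ≥ 15, p_{n-5} + p_n ≥ p_{n+5}, and this fails for n = 14 (i.e., p_9 + p_{14} < p_{19}). Hence the least positive integer N such that p_{n-5} + p_n ≥ p_{n+5} holds for all n ≥ N is N = 15. -/
/-!
Below `p₁₆₂ = 953` the inequality `p_{n+5} ≤ p_{n-5} + p_n` is checked against a table of primes,
certified by trial division. Beyond it, `p_{n-5} ≥ 883`, and a quantitative form of the Erdős
proof of Bertrand's postulate gives ten primes in `(m, 2m]` for every `m ≥ 882`: with at most nine,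
the prime factorisation of `centralBinom m` would bound it by
`(2m) ^ (√(2m) + 9) * 4 ^ (2m / 3)`, too small for `4 ^ m < m * centralBinom m`.
Hence `p_{n+5} ≤ 2 p_{n-5} ≤ p_{n-5} + p_n`. The failure at `n = 14` is `23 + 43 < 67`.
-/

open scoped Nat.Prime

section

open Nat

def IsNextPrime (p q : ℕ) : Prop := p < q ∧ q.Prime ∧ ∀ m, p < m → m < q → ¬ m.Prime

theorem nth_prime_succ_eq {k q : ℕ} (h : IsNextPrime (nth Nat.Prime k) q) :
    nth Nat.Prime (k + 1) = q := by
  obtain ⟨hlt, hq, hgap⟩ := h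
  have hinf := Nat.infinite_setOfPred_prime
  apply le_antisymm
  · calc nth Nat.Prime (k + 1) = nth Nat.Prime (count Nat.Prime (nth Nat.Prime k + 1)) := by
          rw [count_nth_succ_of_infinite hinf]
      _ ≤ nth Nat.Prime (count Nat.Prime q) := nth_monotone hinf (count_monotone _ hlt)
      _ = q := nth_count hq
  · by_contra! h
    exact hgap _ (nth_strictMono hinf k.lt_succ_self) h (prime_nth_prime _)

theorem nth_prime_add_eq_getD_of_isChain (l : List ℕ) (k : ℕ)
    (hl : (nth Nat.Prime k :: l).IsChain IsNextPrime) :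
    ∀ i ≤ l.length, nth Nat.Prime (k + i) = (nth Nat.Prime k :: l).getD i 0 := by
  induction l generalizing k with
  | nil => intro i hi; simp_all
  | cons q l ih =>
    rw [List.isChain_cons_cons] at hl
    have hq := nth_prime_succ_eq hl.1
    rintro (_ | i) hi
    · simp
    · rw [← hq] at hl
      simpa [add_assoc, add_comm 1, hq] using ih (k + 1) hl.2 i (by simpa using hi)

abbrev TrialPrime (b n : ℕ) : Prop := 2 ≤ n ∧ ∀ d < b, 2 ≤ d → d < n → ¬ d ∣ n

theorem prime_iff_trialPrime {b n : ℕ} (hn : n < b * b) : n.Prime ↔ TrialPrime b n := by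
  constructor
  · intro hp
    refine ⟨hp.two_le, fun d _ hd hdn hdvd => ?_⟩
    have := (Nat.prime_def_lt.1 hp).2 d hdn hdvd
    omega
  · rintro ⟨h2, htrial⟩
    refine Nat.prime_def_le_sqrt.2 ⟨h2, fun m hm hms => htrial m ?_ hm ?_⟩
    · have := Nat.le_sqrt.1 hms
      nlinarith
    · exact hms.trans_lt (Nat.sqrt_lt_self h2)

abbrev IsNextTrialPrime (b p q : ℕ) : Prop :=
  q < b * b ∧ p < q ∧ TrialPrime b q ∧ ∀ j < q - p - 1, ¬ TrialPrime b (p + 1 + j)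

-- instance search does not see through the abbreviation under `DecidableRel`
instance (b : ℕ) : DecidableRel (IsNextTrialPrime b) := fun _ _ => inferInstance

theorem isNextPrime_of_isNextTrialPrime {b p q : ℕ} (h : IsNextTrialPrime b p q) :
    IsNextPrime p q := by
  obtain ⟨hq, hpq, hqp, hgap⟩ := h
  refine ⟨hpq, (prime_iff_trialPrime hq).2 hqp,
    fun m hpm hmq hm => hgap (m - p - 1) (by omega) ?_⟩
  rw [show p + 1 + (m - p - 1) = m by omega, ← prime_iff_trialPrime (by nlinarith)]
  exact hm

def smallPrimes : List ℕ := [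
  2, 3, 5, 7, 11, 13, 17, 19, 23, 29, 31, 37, 41, 43, 47, 53, 59, 61, 67, 71, 73, 79, 83, 89, 97,
  101, 103, 107, 109, 113, 127, 131, 137, 139, 149, 151, 157, 163, 167, 173, 179, 181, 191, 193,
  197, 199, 211, 223, 227, 229, 233, 239, 241, 251, 257, 263, 269, 271, 277, 281, 283, 293, 307,
  311, 313, 317, 331, 337, 347, 349, 353, 359, 367, 373, 379, 383, 389, 397, 401, 409, 419, 421,
  431, 433, 439, 443, 449, 457, 461, 463, 467, 479, 487, 491, 499, 503, 509, 521, 523, 541, 547,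
  557, 563, 569, 571, 577, 587, 593, 599, 601, 607, 613, 617, 619, 631, 641, 643, 647, 653, 659,
  661, 673, 677, 683, 691, 701, 709, 719, 727, 733, 739, 743, 751, 757, 761, 769, 773, 787, 797,
  809, 811, 821, 823, 827, 829, 839, 853, 857, 859, 863, 877, 881, 883, 887, 907, 911, 919, 929,
  937, 941, 947, 953]

theorem smallPrimes_isChain_trial : smallPrimes.IsChain (IsNextTrialPrime 31) := by
  decide +kernel

theorem smallPrimes_isChain : smallPrimes.IsChain IsNextPrime :=
  smallPrimes_isChain_trial.imp fun _ _ => isNextPrime_of_isNextTrialPrime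

theorem nth_prime_eq_getD_smallPrimes {i : ℕ} (hi : i < 162) :
    nth Nat.Prime i = smallPrimes.getD i 0 := by
  have hcons : nth Nat.Prime 0 :: smallPrimes.tail = smallPrimes := by
    rw [nth_prime_zero_eq_two]; rfl
  have := nth_prime_add_eq_getD_of_isChain smallPrimes.tail 0 (hcons ▸ smallPrimes_isChain) i
    (by simp only [smallPrimes, List.tail, List.length]; omega)
  rwa [hcons, zero_add] at this

theorem nthPrime_eq_getD_smallPrimes {i : ℕ} (hi : i ≤ 162) :
    nthPrime i = smallPrimes.getD (i - 1) 0 :=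
  nth_prime_eq_getD_smallPrimes (by omega)

theorem smallPrimes_getD_add_five_le : ∀ n < 158, 15 ≤ n →
    smallPrimes.getD (n + 5 - 1) 0 ≤
      smallPrimes.getD (n - 5 - 1) 0 + smallPrimes.getD (n - 1) 0 := by
  decide

theorem nthPrime_add_five_le_of_lt {n : ℕ} (hn : 15 ≤ n) (hn' : n < 158) :
    nthPrime (n + 5) ≤ nthPrime (n - 5) + nthPrime n := by
  rw [nthPrime_eq_getD_smallPrimes (by omega), nthPrime_eq_getD_smallPrimes (by omega),
    nthPrime_eq_getD_smallPrimes (by omega)]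
  exact smallPrimes_getD_add_five_le n hn' hn

end

section

open Real Set

theorem ConcaveOn.comp_two_mul {f : ℝ → ℝ} (hf : ConcaveOn ℝ (Ioi 1) f) :
    ConcaveOn ℝ (Ioi (1 / 2)) fun x => f (2 * x) := by
  refine (hf.comp_linearMap ((2 : ℝ) • LinearMap.id)).subset (fun x hx => ?_) (convex_Ioi _)
  simp only [mem_preimage, LinearMap.smul_apply, LinearMap.id_coe, id_eq, smul_eq_mul, mem_Ioi]
    at hx ⊢
  linarith

theorem real_main_inequality_add_nine {x : ℝ} (hx : 882 ≤ x) :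
    x * (2 * x) ^ (√(2 * x) + 9) * 4 ^ (2 * x / 3) ≤ 4 ^ x := by
  let f : ℝ → ℝ := fun x => log x + √(2 * x) * log (2 * x) + 9 * log (2 * x) - log 4 / 3 * x
  have hpos : ∀ x, 0 < x → 0 < x * (2 * x) ^ (√(2 * x) + 9) / 4 ^ (x / 3) := fun x h => by
    positivity
  have hf : ∀ x, 0 < x → f x = log (x * (2 * x) ^ (√(2 * x) + 9) / 4 ^ (x / 3)) := by
    intro x hx
    rw [log_div (by positivity) (by positivity), log_mul hx.ne' (by positivity),
      log_rpow (by positivity), log_rpow four_pos]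
    ring
  have hconc : ConcaveOn ℝ (Ioi (1 / 2)) f :=
    (((strictConcaveOn_log_Ioi.concaveOn.subset (Ioi_subset_Ioi (by norm_num)) (convex_Ioi _)).add
      strictConcaveOn_sqrt_mul_log_Ioi.concaveOn.comp_two_mul).add
      ((strictConcaveOn_log_Ioi.concaveOn.subset (Ioi_subset_Ioi zero_le_one)
        (convex_Ioi _)).comp_two_mul.smul (by norm_num))).sub
      ((convexOn_id (convex_Ioi _)).smul (by positivity))
  have hx0 : 0 < x := by linarith
  rw [← div_le_one (by positivity), ← div_div_eq_mul_div, ← rpow_sub four_pos, ← mul_div 2 x,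
    mul_div_left_comm, ← mul_one_sub, (by norm_num : (1 : ℝ) - 2 / 3 = 1 / 3), mul_one_div,
    ← log_nonpos_iff (hpos x hx0).le, ← hf x hx0]
  have h18 : 0 ≤ f 18 := by
    have hs : √(2 * 18 : ℝ) = 6 := (sqrt_eq_iff_mul_self_eq_of_pos (by norm_num)).2 (by norm_num)
    rw [hf _ (by norm_num), log_nonneg_iff (hpos _ (by norm_num)), hs, one_le_div (by positivity),
      show (6 : ℝ) + 9 = (15 : ℕ) by norm_num, show (18 : ℝ) / 3 = (6 : ℕ) by norm_num,
      rpow_natCast, rpow_natCast]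
    norm_num
  have h882 : f 882 ≤ 0 := by
    have hs : √(2 * 882 : ℝ) = 42 := (sqrt_eq_iff_mul_self_eq_of_pos (by norm_num)).2 (by norm_num)
    rw [hf _ (by norm_num), log_nonpos_iff (hpos _ (by norm_num)).le, hs,
      div_le_one (by positivity), show (42 : ℝ) + 9 = (51 : ℕ) by norm_num,
      show (882 : ℝ) / 3 = (294 : ℕ) by norm_num, rpow_natCast, rpow_natCast]
    exact_mod_cast (by decide +kernel : 882 * (2 * 882) ^ 51 ≤ 4 ^ 294)
  -- a concave function that is nonnegative at 18 and nonpositive at 882 stays nonpositive after 882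
  rcases hx.eq_or_lt with rfl | hlt
  · exact h882
  · exact (hconc.right_le_of_le_left'' (by norm_num) (by norm_num; linarith) (by norm_num) hlt.le
      (h882.trans h18)).trans h882

end

open Finset Nat

theorem prod_primesLE_pow_factorization_centralBinom_le {n : ℕ} (hn : 2 < n) :
    ∏ p ∈ primesLE n, p ^ (centralBinom n).factorization p ≤
      (2 * n) ^ sqrt (2 * n) * 4 ^ (2 * n / 3) := by
  set f : ℕ → ℕ := fun p => p ^ (centralBinom n).factorization p
  -- primes in `(2n/3, n]` do not divide `centralBinom n`
  have hsub : ∏ p ∈ primesLE n, f p = ∏ p ∈ primesLE (2 * n / 3), f p := by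
    refine (prod_subset (primesLE_mono (by omega)) fun p hp hp' => ?_).symm
    rw [mem_primesLE] at hp hp'
    have hp3 : ¬ p ≤ 2 * n / 3 := fun h => hp' ⟨h, hp.2⟩
    simp only [f, factorization_centralBinom_of_two_mul_self_lt_three_mul hn hp.1 (by omega),
      pow_zero]
  rw [hsub, ← prod_filter_mul_prod_filter_not _ (· ≤ sqrt (2 * n))]
  gcongr
  · calc ∏ p ∈ (primesLE (2 * n / 3)).filter (· ≤ sqrt (2 * n)), f p
        ≤ ∏ _p ∈ (primesLE (2 * n / 3)).filter (· ≤ sqrt (2 * n)), 2 * n :=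
          prod_le_prod' fun p _ => pow_factorization_choose_le (by omega)
      _ ≤ (2 * n) ^ sqrt (2 * n) := by
          rw [prod_const]
          refine pow_le_pow_right₀ (by omega)
            ((card_le_card fun p hp => ?_).trans (card_Icc 1 _).le)
          rw [mem_filter] at hp
          exact mem_Icc.2 ⟨(one_lt_of_mem_primesLE hp.1).le, hp.2⟩
  · calc ∏ p ∈ (primesLE (2 * n / 3)).filter (¬ · ≤ sqrt (2 * n)), f p
        ≤ ∏ p ∈ (primesLE (2 * n / 3)).filter (¬ · ≤ sqrt (2 * n)), p := by
          refine prod_le_prod' fun p hp => ?_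
          rw [mem_filter, not_le] at hp
          exact (pow_le_pow_right₀ (one_lt_of_mem_primesLE hp.1).le
            (factorization_choose_le_one (sqrt_lt'.1 hp.2))).trans (pow_one p).le
      _ ≤ primorial (2 * n / 3) :=
          prod_le_prod_of_subset_of_one_le' (filter_subset _ _)
            fun p hp _ => (one_lt_of_mem_primesLE hp).le
      _ ≤ 4 ^ (2 * n / 3) := primorial_le_four_pow _

theorem centralBinom_le_of_primeCounting_le {n k : ℕ} (hn : 2 < n) (hk : π (2 * n) ≤ π n + k) :
    centralBinom n ≤ (2 * n) ^ (sqrt (2 * n) + k) * 4 ^ (2 * n / 3) := by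
  set f : ℕ → ℕ := fun p => p ^ (centralBinom n).factorization p
  have hprod : ∏ p ∈ primesLE (2 * n), f p = centralBinom n := by
    rw [← prod_pow_factorization_centralBinom, primesLE_eq_filter_range]
    exact prod_filter_of_ne fun p _ hp => by
      contrapose! hp
      simp [f, factorization_eq_zero_of_not_prime _ hp]
  have hsmall : (primesLE (2 * n)).filter (· ≤ n) = primesLE n := by
    ext p
    simp only [mem_filter, mem_primesLE]
    exact ⟨fun ⟨⟨_, hp⟩, hpn⟩ => ⟨hpn, hp⟩, fun ⟨hpn, hp⟩ => ⟨⟨by omega, hp⟩, hpn⟩⟩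
  have hcard : #((primesLE (2 * n)).filter (¬ · ≤ n)) ≤ k := by
    have := card_filter_add_card_filter_not (s := primesLE (2 * n)) (p := (· ≤ n))
    rw [hsmall, primesLE_card_eq_primeCounting, primesLE_card_eq_primeCounting] at this
    omega
  rw [← hprod, ← prod_filter_mul_prod_filter_not _ (· ≤ n), hsmall, pow_add, mul_right_comm]
  gcongr
  · exact prod_primesLE_pow_factorization_centralBinom_le hn
  · calc ∏ p ∈ (primesLE (2 * n)).filter (¬ · ≤ n), f p
        ≤ ∏ _p ∈ (primesLE (2 * n)).filter (¬ · ≤ n), 2 * n :=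
          prod_le_prod' fun p _ => pow_factorization_choose_le (by omega)
      _ ≤ (2 * n) ^ k := by rw [prod_const]; exact pow_le_pow_right₀ (by omega) hcard

theorem main_inequality_add_nine {n : ℕ} (hn : 882 ≤ n) :
    n * (2 * n) ^ (sqrt (2 * n) + 9) * 4 ^ (2 * n / 3) ≤ 4 ^ n := by
  rw [← @cast_le ℝ]
  simp only [cast_add, cast_mul, cast_pow, cast_ofNat, ← Real.rpow_natCast]
  refine le_trans ?_ (real_main_inequality_add_nine (by exact_mod_cast hn))
  gcongr
  · exact_mod_cast (by omega : 0 < 2 * n)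
  · exact_mod_cast Real.nat_sqrt_le_real_sqrt
  · norm_num
  · exact cast_div_le.trans (by norm_cast)

theorem primeCounting_add_ten_le {m : ℕ} (hm : 882 ≤ m) : π m + 10 ≤ π (2 * m) := by
  by_contra! h
  have hle := centralBinom_le_of_primeCounting_le (n := m) (k := 9) (by omega) (by omega)
  have hlt := four_pow_lt_mul_centralBinom m (by omega)
  have := main_inequality_add_nine hm
  rw [mul_assoc] at this
  exact (hlt.trans_le ((Nat.mul_le_mul_left m hle).trans this)).false

theorem nth_prime_add_ten_le_two_mul {a : ℕ} (ha : 882 ≤ nth Nat.Prime a) :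
    nth Nat.Prime (a + 10) ≤ 2 * nth Nat.Prime a := by
  have hcount : count Nat.Prime (nth Nat.Prime a + 1) = a + 1 :=
    count_nth_succ_of_infinite infinite_setOfPred_prime a
  have hten : count Nat.Prime (nth Nat.Prime a + 1) + 10 ≤
      count Nat.Prime (2 * nth Nat.Prime a + 1) :=
    primeCounting_add_ten_le ha
  exact Nat.lt_add_one_iff.1 (nth_lt_of_lt_count (by omega))

theorem nthPrime_add_five_le {n : ℕ} (hn : 15 ≤ n) :
    nthPrime (n + 5) ≤ nthPrime (n - 5) + nthPrime n := by
  rcases lt_or_ge n 158 with hlt | hge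
  · exact nthPrime_add_five_le_of_lt hn hlt
  have hinf := infinite_setOfPred_prime
  have hlarge : 882 ≤ nthPrime (n - 5) :=
    calc 882 ≤ nthPrime 153 := by rw [nthPrime_eq_getD_smallPrimes (by norm_num)]; decide
      _ ≤ nthPrime (n - 5) := nth_monotone hinf (by omega)
  have hten : nthPrime (n + 5) ≤ 2 * nthPrime (n - 5) := by
    rw [nthPrime, show n + 5 - 1 = n - 5 - 1 + 10 by omega]
    exact nth_prime_add_ten_le_two_mul hlarge
  have hmono : nthPrime (n - 5) ≤ nthPrime n := nth_monotone hinf (by omega)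
  omega

theorem N_five_five_eq_fifteen :
    (∀ n : ℕ, 15 ≤ n → nthPrime (n - 5) + nthPrime n ≥ nthPrime (n + 5)) ∧
    nthPrime 9 + nthPrime 14 < nthPrime 19 ∧
    IsLeast {N : ℕ | 0 < N ∧ ∀ n : ℕ, N ≤ n →
      nthPrime (n - 5) + nthPrime n ≥ nthPrime (n + 5)} 15 := by
  have h14 : nthPrime 9 + nthPrime 14 < nthPrime 19 := by
    rw [nthPrime_eq_getD_smallPrimes (by norm_num), nthPrime_eq_getD_smallPrimes (by norm_num),
      nthPrime_eq_getD_smallPrimes (by norm_num)]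
    decide
  refine ⟨fun n hn => nthPrime_add_five_le hn, h14,
    ⟨by norm_num, fun n hn => nthPrime_add_five_le hn⟩, fun N ⟨_, hN⟩ => ?_⟩
  by_contra! hN15
  exact (hN 14 (by omega)).not_gt h14
end

section
/- For every integer n ≥ 33, the real-number inequality n·log n + (n−1)·log(n−1) + (n−2)·log(n−2) > (n+1)·(log(n+1) + log(log(n+1))) + (n+2)·(log(n+2) + log(log(n+2))) holds. -/
/-!
Every logarithm is replaced by a tangent line of `log`. At `x` the terms `(x - k) log (x - k)`
lose at most `k` against `(x - k) log x`, so the left side is at least `(3x - 3) log x - 3`.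
On the right, `log (x + k) ≤ log x + k / x`, and the tangent at `4` gives
`log (log y) ≤ log y / 4 + 2 log 2 - 1`, so the right side is at most about `(5/2 x) log x`
plus a linear term in `x`. The gap `(x / 2) log x` wins once `log x` is large enough compared
with `4 (2 log 2 - 1) ≈ 1.55`; at `x = 33` the margin is about `0.5`, so `log 2` and `log 33`
need a few correct digits.
-/

open Real

lemma log_le_log_add_sub_div {a b : ℝ} (ha : 0 < a) (hb : 0 < b) :
    log b ≤ log a + (b - a) / a := by
  have h := log_le_sub_one_of_pos (div_pos hb ha)
  rw [log_div hb.ne' ha.ne', div_sub_one ha.ne'] at h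
  linarith

lemma mul_log_le_mul_log_add_sub {a b : ℝ} (ha : 0 < a) (hb : 0 < b) :
    a * log b ≤ a * log a + (b - a) := by
  have h := mul_le_mul_of_nonneg_left (log_le_log_add_sub_div ha hb) ha.le
  rwa [mul_add, mul_div_cancel₀ _ ha.ne'] at h

lemma log_le_div_four_add {y : ℝ} (hy : 0 < y) : log y ≤ y / 4 + (2 * log 2 - 1) := by
  have h := log_le_log_add_sub_div (by norm_num : (0 : ℝ) < 4) hy
  have h4 : log 4 = 2 * log 2 := by
    rw [show (4 : ℝ) = 2 ^ 2 by norm_num, log_pow, Nat.cast_ofNat]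
  linarith

lemma log_add_le_log_add_div {x k c : ℝ} (hc : 0 < c) (hcx : c ≤ x) (hk : 0 ≤ k) :
    log (x + k) ≤ log x + k / c := by
  have hx : 0 < x := hc.trans_le hcx
  have h := log_le_log_add_sub_div hx (by linarith : 0 < x + k)
  rw [add_sub_cancel_left] at h
  linarith [div_le_div_of_nonneg_left hk hc hcx]

lemma mul_log_add_log_log_le {x k c : ℝ} (hc : 1 < c) (hcx : c ≤ x) (hk : 0 ≤ k) :
    (x + k) * (log (x + k) + log (log (x + k))) ≤
      (x + k) * (5 / 4 * (log x + k / c) + (2 * log 2 - 1)) := by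
  have hlog_pos : 0 < log (x + k) := log_pos (by linarith)
  have hloglog := log_le_div_four_add hlog_pos
  have hlog := log_add_le_log_add_div (by linarith) hcx hk
  exact mul_le_mul_of_nonneg_left (by linarith) (by linarith)

lemma le_mul_log_add_mul_log_sub_one_add_mul_log_sub_two {x : ℝ} (hx : 2 < x) :
    (3 * x - 3) * log x - 3 ≤
      x * log x + (x - 1) * log (x - 1) + (x - 2) * log (x - 2) := by
  have h1 := mul_log_le_mul_log_add_sub (by linarith : 0 < x - 1) (by linarith : 0 < x)
  have h2 := mul_log_le_mul_log_add_sub (by linarith : 0 < x - 2) (by linarith : 0 < x)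
  linarith

lemma log_thirtythree_gt : (3.49 : ℝ) < log 33 := by
  have h := log_le_log_add_sub_div (by norm_num : (0 : ℝ) < 33) (by norm_num : (0 : ℝ) < 32)
  have h32 : log 32 = 5 * log 2 := by
    rw [show (32 : ℝ) = 2 ^ 5 by norm_num, log_pow, Nat.cast_ofNat]
  linarith [log_two_gt_d9]

lemma log_inequality_of_bounds {x L : ℝ} (hx : 33 ≤ x) (hL : 3.49 ≤ L) :
    (x + 1) * (5 / 4 * (L + 1 / 33) + (2 * log 2 - 1)) +
        (x + 2) * (5 / 4 * (L + 2 / 33) + (2 * log 2 - 1)) <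
      (3 * x - 3) * L - 3 := by
  nlinarith [mul_nonneg (sub_nonneg.2 hx) (sub_nonneg.2 hL), log_two_lt_d9]

theorem log_inequality_for_n_ge_33 (n : ℕ) (hn : 33 ≤ n) :
    (n : ℝ) * Real.log n + ((n : ℝ) - 1) * Real.log ((n : ℝ) - 1) +
      ((n : ℝ) - 2) * Real.log ((n : ℝ) - 2) >
    ((n : ℝ) + 1) * (Real.log ((n : ℝ) + 1) + Real.log (Real.log ((n : ℝ) + 1))) +
      ((n : ℝ) + 2) * (Real.log ((n : ℝ) + 2) + Real.log (Real.log ((n : ℝ) + 2))) := by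
  have hx : (33 : ℝ) ≤ n := by exact_mod_cast hn
  have hL : (3.49 : ℝ) ≤ log n :=
    log_thirtythree_gt.le.trans (log_le_log (by norm_num) hx)
  have h1 := mul_log_add_log_log_le (by norm_num) hx zero_le_one
  have h2 := mul_log_add_log_log_le (by norm_num) hx zero_le_two
  linarith [le_mul_log_add_mul_log_sub_one_add_mul_log_sub_two (by linarith : (2 : ℝ) < n),
    log_inequality_of_bounds hx hL]
end
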